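/- Let G be a countable group with a subgroup H such that the pair (G,H) is inner amenable and H is nonamenable. Then at least one of the following holds: (1) for every finite collection F of nonamenable subgroups of H there exists an infinite amenable subgroup K of G such that L ∩ C_G(K) is nonamenable for all L ∈ F; (2) for every finite collection F of nonamenable subgroups of H there exists an increasing sequence M_0 ≤ M_1 ≤ ⋯ of finite subgroups of G with |M_n| → ∞ such that L ∩ C_G(M_n) is nonamenable for all L ∈ F and all n ∈ ℕ; (3) for every finite collection F of nonamenable subgroups of H there exists a nonamenable subgroup K of G such that L ∩ C_G(K) is nonamenable for all L ∈ F. -/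

import Mathlib

open Pointwise

/-- A mean on `X`: a finitely additive probability measure defined on all subsets of `X`. -/
structure Mean (X : Type*) where
  m : Set X → ℝ
  nonneg : ∀ A : Set X, 0 ≤ m A
  total : m Set.univ = 1
  fin_add : ∀ A B : Set X, Disjoint A B → m (A ∪ B) = m A + m B

/-- A mean on a `G`-set `X` is invariant if it is preserved by the action of every `g ∈ G`. -/
def MeanInvariant (G : Type*) [Group G] {X : Type*} [MulAction G X] (m : Mean X) : Prop :=
  ∀ (g : G) (A : Set X), m.m ((fun x => g • x) '' A) = m.m A

/-- The action of `G` on `X` is amenable: there is a `G`-invariant mean on `X`. -/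
def AmenableAction (G : Type*) [Group G] (X : Type*) [MulAction G X] : Prop :=
  ∃ m : Mean X, MeanInvariant G m

/-- A group is amenable if its left translation action on itself admits an invariant mean. -/
def AmenableGroup (G : Type*) [Group G] : Prop :=
  ∃ m : Mean G, ∀ (g : G) (A : Set G), m.m ((fun x => g * x) '' A) = m.m A

/-- `H` is `L`-q-normal in `M` if `{g ∈ M : gHg⁻¹ ∩ H ∈ L}` generates `M`. -/
def IsLQNormal {G : Type*} [Group G] (L : Subgroup G → Prop) (H M : Subgroup G) : Prop :=
  H ≤ M ∧
    Subgroup.closure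
      {g : G | g ∈ M ∧ L (Subgroup.map (MulAut.conj g).toMonoidHom H ⊓ H)} = M

/-- `H` is `L`-wq-normal in `M`: there is an increasing ordinal-indexed chain from `H` to `M`
whose unions of initial segments are `L`-q-normal at every stage. -/
def IsLWQNormal {G : Type*} [Group G] (L : Subgroup G → Prop) (H M : Subgroup G) : Prop :=
  ∃ (lam : Ordinal.{0}) (c : Ordinal.{0} → Subgroup G),
    (∀ α β : Ordinal.{0}, α ≤ β → β ≤ lam → c α ≤ c β) ∧
    c 0 = H ∧ c lam = M ∧
    ∀ α : Ordinal.{0}, 0 < α → α ≤ lam →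
      IsLQNormal L (⨆ (β : Ordinal.{0}) (_ : β < α), c β) (c α)

/-- q*-normality: `{g ∈ M : gHg⁻¹ ∩ H nonamenable}` generates `M`. -/
def IsQStarNormal {G : Type*} [Group G] (H M : Subgroup G) : Prop :=
  IsLQNormal (fun K => ¬ AmenableGroup ↥K) H M

/-- wq*-normality. -/
def IsWQStarNormal {G : Type*} [Group G] (H M : Subgroup G) : Prop :=
  IsLWQNormal (fun K => ¬ AmenableGroup ↥K) H M

/-- q-normality: `{g ∈ M : gHg⁻¹ ∩ H infinite}` generates `M`. -/
def IsQNormal {G : Type*} [Group G] (H M : Subgroup G) : Prop :=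
  IsLQNormal (fun K => ((K : Set G)).Infinite) H M

/-- wq-normality. -/
def IsWQNormal {G : Type*} [Group G] (H M : Subgroup G) : Prop :=
  IsLWQNormal (fun K => ((K : Set G)).Infinite) H M

/-- `n`-degree `L`-wq-normality in `G`: `L₀ = L`, `L_{n+1} = {H : H is Lₙ-wq-normal in G}`. -/
def NDegLWQNormal {G : Type*} [Group G] (L : Subgroup G → Prop) : ℕ → Subgroup G → Prop
  | 0, H => L H
  | n + 1, H => IsLWQNormal (NDegLWQNormal L n) H ⊤

/-- The isoperimetric constant `φ_S(X)` of a `G`-set `X` with respect to a finite `S ⊆ G`. -/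
noncomputable def phiConst {G : Type*} [Group G] (S : Finset G) (X : Type*) [MulAction G X] :
    ℝ :=
  sInf {r : ℝ | ∃ P : Finset X, P.Nonempty ∧
    r = (∑ s ∈ S, (((s • (P : Set X)) \ (P : Set X)).ncard : ℝ)) / (P.card : ℝ)}


/-- The pair `(G,H)` is inner amenable: there is an atomless mean on `G` invariant under
conjugation by elements of `H`. -/
def PairInnerAmenable {G : Type*} [Group G] (H : Subgroup G) : Prop :=
  ∃ m : Mean G, (∀ g : G, m.m {g} = 0) ∧
    ∀ h ∈ H, ∀ A : Set G, m.m ((fun x => h * x * h⁻¹) '' A) = m.m A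

/-!
Let `m` be an atomless mean on `G` invariant under conjugation by `H`, and let `L ≤ H` be
nonamenable. The set of `g` for which `L ∩ C_G(g)` is amenable is `m`-null: otherwise `L` acts by
conjugation on this set, with an invariant mean (the normalised restriction of `m`) and amenable
stabilizers `L ∩ C_G(g)`, and averaging invariant means of the stabilizers against it yields an
invariant mean on `L`. Since `m` is atomless, for a finite subgroup `M` with every `L ∩ C_G(M)`
nonamenable (`L` in a finite family) we can thus pick `g ∉ M` such that every
`L ∩ C_G(⟨M, g⟩) = (L ∩ C_G(M)) ∩ C_G(g)` is still nonamenable. Iterating from the trivial group,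
either some subgroup obtained is infinite, and then amenable (case 1) or not (case 3), or all are
finite and form a strictly increasing chain (case 2).
-/

namespace Mean

open Filter Topology

variable {X : Type*} (m : Mean X)

lemma m_empty : m.m ∅ = 0 := by
  have h := m.fin_add ∅ ∅ (Set.disjoint_empty _)
  rw [Set.union_empty] at h
  linarith

lemma m_mono {A B : Set X} (h : A ⊆ B) : m.m A ≤ m.m B := by
  have h' := m.fin_add A (B \ A) Set.disjoint_sdiff_right
  rw [Set.union_sdiff_cancel h] at h'
  linarith [m.nonneg (B \ A)]

lemma m_mem_Icc (A : Set X) : m.m A ∈ Set.Icc 0 1 :=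
  ⟨m.nonneg A, m.total ▸ m.m_mono (Set.subset_univ A)⟩

lemma m_union_eq_zero {A B : Set X} (hA : m.m A = 0) (hB : m.m B = 0) : m.m (A ∪ B) = 0 := by
  have h := m.fin_add A (B \ A) Set.disjoint_sdiff_right
  rw [Set.union_sdiff_self] at h
  linarith [m.m_mono (Set.sdiff_subset : B \ A ⊆ B), m.nonneg (B \ A)]

lemma m_biUnion_eq_zero {ι : Type*} (s : Finset ι) {A : ι → Set X}
    (h : ∀ i ∈ s, m.m (A i) = 0) : m.m (⋃ i ∈ s, A i) = 0 := by
  classical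
  induction s using Finset.induction_on with
  | empty => simpa using m.m_empty
  | insert i s _ ih =>
    rw [Finset.set_biUnion_insert]
    exact m.m_union_eq_zero (h i (s.mem_insert_self i))
      (ih fun j hj => h j (Finset.mem_insert_of_mem hj))

lemma m_eq_zero_of_finite (hm : ∀ x, m.m {x} = 0) {A : Set X} (hA : A.Finite) : m.m A = 0 := by
  rw [← Set.biUnion_of_singleton A, ← hA.coe_toFinset]
  exact m.m_biUnion_eq_zero _ fun x _ => hm x

lemma exists_notMem_of_m_eq_zero {A : Set X} (hA : m.m A = 0) : ∃ x, x ∉ A := by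
  by_contra! h
  rw [Set.eq_univ_of_forall h, m.total] at hA
  exact one_ne_zero hA

lemma sum_m_inter_preimage {ι : Type*} [Fintype ι] (π : X → ι) (A : Set X) :
    ∑ i, m.m (A ∩ π ⁻¹' {i}) = m.m A := by
  classical
  suffices h : ∀ s : Finset ι, ∑ i ∈ s, m.m (A ∩ π ⁻¹' {i}) = m.m (A ∩ π ⁻¹' s) by
    simpa using h Finset.univ
  intro s
  induction s using Finset.induction_on with
  | empty => simp [m_empty]
  | insert i s hi ih =>
    rw [Finset.sum_insert hi, ih, Finset.coe_insert, Set.insert_eq, Set.preimage_union,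
      Set.inter_union_distrib_left, m.fin_add]
    exact Set.disjoint_left.2 fun x hx hx' => hi (Set.mem_singleton_iff.1 hx.2 ▸ hx'.2)

lemma sum_m_preimage {ι : Type*} [Fintype ι] (π : X → ι) : ∑ i, m.m (π ⁻¹' {i}) = 1 := by
  simpa [m.total] using m.sum_m_inter_preimage π Set.univ

def stepSum {ι : Type*} [Fintype ι] (π : X → ι) (c : ι → ℝ) : ℝ :=
  ∑ i, c i * m.m (π ⁻¹' {i})

lemma abs_stepSum_sub_stepSum_le {ι κ : Type*} [Fintype ι] [Fintype κ] {f : X → ℝ}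
    {π : X → ι} {π' : X → κ} {c : ι → ℝ} {c' : κ → ℝ} {ε ε' : ℝ}
    (h : ∀ x, |f x - c (π x)| ≤ ε) (h' : ∀ x, |f x - c' (π' x)| ≤ ε') :
    |m.stepSum π c - m.stepSum π' c'| ≤ ε + ε' := by
  set cell : ι → κ → Set X := fun i j => π ⁻¹' {i} ∩ π' ⁻¹' {j}
  have hsum : m.stepSum π c - m.stepSum π' c' = ∑ i, ∑ j, (c i - c' j) * m.m (cell i j) := by
    have h₁ : m.stepSum π c = ∑ i, ∑ j, c i * m.m (cell i j) := by
      simp only [stepSum, cell, ← Finset.mul_sum, m.sum_m_inter_preimage]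
    have h₂ : m.stepSum π' c' = ∑ i, ∑ j, c' j * m.m (cell i j) := by
      rw [Finset.sum_comm]
      simp only [stepSum, cell, Set.inter_comm (π ⁻¹' _), ← Finset.mul_sum,
        m.sum_m_inter_preimage]
    simp only [h₁, h₂, ← Finset.sum_sub_distrib, sub_mul]
  have hcell : ∀ i j, |c i - c' j| * m.m (cell i j) ≤ (ε + ε') * m.m (cell i j) := by
    intro i j
    rcases (cell i j).eq_empty_or_nonempty with he | ⟨x, hi, hj⟩
    · simp [he, m_empty]
    · refine mul_le_mul_of_nonneg_right ?_ (m.nonneg _)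
      rw [Set.mem_preimage, Set.mem_singleton_iff] at hi hj
      calc |c i - c' j| = |(f x - c' (π' x)) - (f x - c (π x))| := by rw [hi, hj]; ring_nf
        _ ≤ ε + ε' := (abs_sub _ _).trans (by linarith [h x, h' x])
  calc |m.stepSum π c - m.stepSum π' c'|
      ≤ ∑ i, ∑ j, |c i - c' j| * m.m (cell i j) := by
        rw [hsum]
        refine (Finset.abs_sum_le_sum_abs _ _).trans (Finset.sum_le_sum fun i _ => ?_)
        refine (Finset.abs_sum_le_sum_abs _ _).trans (le_of_eq ?_)
        simp [abs_mul, abs_of_nonneg (m.nonneg _)]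
    _ ≤ ∑ i, ∑ j, (ε + ε') * m.m (cell i j) :=
        Finset.sum_le_sum fun i _ => Finset.sum_le_sum fun j _ => hcell i j
    _ = ε + ε' := by
        simp only [cell, ← Finset.mul_sum, m.sum_m_inter_preimage, m.sum_m_preimage, mul_one]

/-- `Fin.ofNat` wraps around, which never happens for `[0, 1]`-valued `f`. -/
noncomputable def gridIndex (f : X → ℝ) (n : ℕ) (x : X) : Fin (n + 2) :=
  Fin.ofNat (n + 2) ⌊(n + 1) * f x⌋₊

lemma abs_sub_gridIndex_le {f : X → ℝ} (hf : ∀ x, f x ∈ Set.Icc 0 1) (n : ℕ) (x : X) :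
    |f x - ((gridIndex f n x : ℕ) : ℝ) / (n + 1)| ≤ 1 / (n + 1) := by
  have hn : (0 : ℝ) < n + 1 := by positivity
  have h0 : 0 ≤ (n + 1) * f x := mul_nonneg hn.le (hf x).1
  have hfloor : ⌊(n + 1) * f x⌋₊ < n + 2 :=
    Nat.lt_succ_of_le (Nat.floor_le_of_le (by exact_mod_cast mul_le_of_le_one_right hn.le (hf x).2))
  rw [gridIndex, Fin.val_ofNat, Nat.mod_eq_of_lt hfloor,
    show ∀ a b : ℝ, a - b / (n + 1) = ((n + 1) * a - b) / (n + 1) by intros; field_simp,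
    abs_div, abs_of_pos hn, div_le_div_iff_of_pos_right hn, abs_le]
  constructor <;> linarith [Nat.floor_le h0, Nat.lt_floor_add_one ((n + 1) * f x)]

lemma exists_abs_sub_step_le {f : X → ℝ} (hf : ∀ x, f x ∈ Set.Icc 0 1) {ε : ℝ} (hε : 0 < ε) :
    ∃ (n : ℕ) (π : X → Fin n) (c : Fin n → ℝ), ∀ x, |f x - c (π x)| ≤ ε := by
  obtain ⟨n, hn⟩ := exists_nat_one_div_lt hε
  exact ⟨n + 2, gridIndex f n, fun k => (k : ℕ) / (n + 1),
    fun x => (abs_sub_gridIndex_le hf n x).trans hn.le⟩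

noncomputable def gridSum (f : X → ℝ) (n : ℕ) : ℝ :=
  m.stepSum (gridIndex f n) fun k => (k : ℕ) / (n + 1)

/-- Meaningful only for `[0, 1]`-valued `f`, where the grid sums converge
(`tendsto_gridSum_integral`). -/
noncomputable def integral (f : X → ℝ) : ℝ :=
  limUnder atTop (m.gridSum f)

lemma tendsto_gridSum_integral {f : X → ℝ} (hf : ∀ x, f x ∈ Set.Icc 0 1) :
    Tendsto (m.gridSum f) atTop (𝓝 (m.integral f)) := by
  refine CauchySeq.tendsto_limUnder (cauchySeq_of_le_tendsto_0 (fun N : ℕ => 2 / (N + 1))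
    (fun n p N hn hp => ?_) ?_)
  · rw [Real.dist_eq]
    refine (m.abs_stepSum_sub_stepSum_le (abs_sub_gridIndex_le hf n)
      (abs_sub_gridIndex_le hf p)).trans ?_
    have hn' : 1 / ((n : ℝ) + 1) ≤ 1 / (N + 1) := by gcongr
    have hp' : 1 / ((p : ℝ) + 1) ≤ 1 / (N + 1) := by gcongr
    linarith [show 2 / ((N : ℝ) + 1) = 1 / (N + 1) + 1 / (N + 1) by ring]
  · simpa [div_eq_mul_inv] using (tendsto_one_div_add_atTop_nhds_zero_nat (𝕜 := ℝ)).const_mul 2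

lemma abs_integral_sub_stepSum_le {ι : Type*} [Fintype ι] {f : X → ℝ}
    (hf : ∀ x, f x ∈ Set.Icc 0 1) {π : X → ι} {c : ι → ℝ} {ε : ℝ}
    (h : ∀ x, |f x - c (π x)| ≤ ε) : |m.integral f - m.stepSum π c| ≤ ε := by
  refine le_of_tendsto_of_tendsto' ((m.tendsto_gridSum_integral hf).sub_const _).abs
    (by simpa using (tendsto_one_div_add_atTop_nhds_zero_nat (𝕜 := ℝ)).add_const ε)
    fun n => m.abs_stepSum_sub_stepSum_le (abs_sub_gridIndex_le hf n) h

lemma integral_nonneg {f : X → ℝ} (hf : ∀ x, f x ∈ Set.Icc 0 1) : 0 ≤ m.integral f :=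
  ge_of_tendsto' (m.tendsto_gridSum_integral hf) fun _ => by
    simp only [gridSum, stepSum]
    exact Finset.sum_nonneg fun _ _ => mul_nonneg (by positivity) (m.nonneg _)

lemma integral_one : m.integral (fun _ => 1) = 1 := by
  have h := m.abs_integral_sub_stepSum_le (fun _ => ⟨zero_le_one, le_rfl⟩)
    (π := fun _ => ()) (c := fun _ => 1) (ε := 0) (by simp)
  simpa [stepSum, m.total, sub_eq_zero] using h

lemma integral_add {f g : X → ℝ} (hf : ∀ x, f x ∈ Set.Icc 0 1) (hg : ∀ x, g x ∈ Set.Icc 0 1)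
    (hfg : ∀ x, f x + g x ∈ Set.Icc 0 1) :
    m.integral (fun x => f x + g x) = m.integral f + m.integral g := by
  refine eq_of_forall_dist_le fun ε hε => ?_
  obtain ⟨n, π, c, hc⟩ := exists_abs_sub_step_le hf (by positivity : 0 < ε / 4)
  obtain ⟨n', π', c', hc'⟩ := exists_abs_sub_step_le hg (by positivity : 0 < ε / 4)
  -- approximate `f`, `g` and `f + g` on the common refinement of both partitions
  set ρ : X → Fin n × Fin n' := fun x => (π x, π' x)
  have h₁ := m.abs_integral_sub_stepSum_le hfg (π := ρ) (c := fun i => c i.1 + c' i.2)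
    fun x => by
      rw [add_sub_add_comm]
      exact (abs_add_le _ _).trans (add_le_add (hc x) (hc' x))
  have h₂ := m.abs_integral_sub_stepSum_le hf (π := ρ) (c := fun i => c i.1) hc
  have h₃ := m.abs_integral_sub_stepSum_le hg (π := ρ) (c := fun i => c' i.2) hc'
  have hsum : m.stepSum ρ (fun i => c i.1 + c' i.2) =
      m.stepSum ρ (fun i => c i.1) + m.stepSum ρ (fun i => c' i.2) := by
    simp only [stepSum, add_mul, Finset.sum_add_distrib]
  rw [hsum, abs_le] at h₁
  rw [abs_le] at h₂ h₃
  rw [Real.dist_eq, abs_le]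
  constructor <;> linarith [h₁.1, h₁.2, h₂.1, h₂.2, h₃.1, h₃.2]

lemma integral_comp {f : X → ℝ} (hf : ∀ x, f x ∈ Set.Icc 0 1) {e : X → X}
    (he : ∀ A, m.m (e ⁻¹' A) = m.m A) : m.integral (f ∘ e) = m.integral f := by
  refine eq_of_forall_dist_le fun ε hε => ?_
  obtain ⟨n, π, c, hc⟩ := exists_abs_sub_step_le hf (half_pos hε)
  have h₁ := m.abs_integral_sub_stepSum_le (f := f ∘ e) (fun x => hf (e x)) (π := π ∘ e)
    fun x => hc (e x)
  have h₂ := m.abs_integral_sub_stepSum_le hf hc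
  have hstep : m.stepSum (π ∘ e) c = m.stepSum π c := by
    simp only [stepSum, Set.preimage_comp, he]
  rw [hstep, abs_le] at h₁
  rw [abs_le] at h₂
  rw [Real.dist_eq, abs_le]
  constructor <;> linarith [h₁.1, h₁.2, h₂.1, h₂.2]

variable {Z : Type*}

def map (f : X → Z) : Mean Z where
  m A := m.m (f ⁻¹' A)
  nonneg _ := m.nonneg _
  total := m.total
  fin_add _ _ h := m.fin_add _ _ (h.preimage f)

noncomputable def bind (μ : X → Mean Z) : Mean Z where
  m A := m.integral fun x => (μ x).m A
  nonneg A := m.integral_nonneg fun x => (μ x).m_mem_Icc A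
  total := by simpa only [Mean.total] using m.integral_one
  fin_add A B h := by
    simp only [(μ _).fin_add A B h]
    exact m.integral_add (fun x => (μ x).m_mem_Icc A) (fun x => (μ x).m_mem_Icc B)
      fun x => (μ x).fin_add A B h ▸ (μ x).m_mem_Icc (A ∪ B)

end Mean

section Invariance

variable {Γ X Z : Type*} [Group Γ] [MulAction Γ X]

lemma MeanInvariant.bind [MulAction Γ Z] {m : Mean X} (hm : MeanInvariant Γ m)
    {μ : X → Mean Z} (hμ : ∀ (γ : Γ) x A, (μ (γ • x)).m (γ • A) = (μ x).m A) :
    MeanInvariant Γ (m.bind μ) := by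
  intro γ A
  rw [Set.image_smul]
  change m.integral (fun x => (μ x).m (γ • A)) = m.integral fun x => (μ x).m A
  have hcomp : (fun x => (μ x).m (γ • A)) = (fun x => (μ x).m A) ∘ (γ⁻¹ • ·) :=
    funext fun x => by simpa using hμ γ (γ⁻¹ • x) A
  rw [hcomp, m.integral_comp (fun x => (μ x).m_mem_Icc A)]
  intro B
  rw [Set.preimage_smul, inv_inv, ← Set.image_smul, hm]

lemma MeanInvariant.amenableAction_subMulAction {m : Mean X} (hm : MeanInvariant Γ m)
    (p : SubMulAction Γ X) (hp : 0 < m.m p) : AmenableAction Γ p := by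
  refine ⟨⟨fun A => m.m (Subtype.val '' A) / m.m p, fun A => div_nonneg (m.nonneg _) hp.le,
    ?_, fun A B h => ?_⟩, fun γ A => ?_⟩
  · simp [div_self hp.ne']
  · simp only [Set.image_union, ← add_div]
    rw [m.fin_add _ _ ((Set.disjoint_image_iff Subtype.val_injective).2 h)]
  · simp only [Set.image_image, SubMulAction.val_smul]
    rw [← Set.image_image (γ • ·), hm]

end Invariance

section Amenable

open MulAction

variable {Γ Γ' X : Type*} [Group Γ] [Group Γ']

lemma AmenableGroup.of_surjective (hΓ : AmenableGroup Γ) (f : Γ →* Γ')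
    (hf : Function.Surjective f) : AmenableGroup Γ' := by
  obtain ⟨m, hm⟩ := hΓ
  refine ⟨m.map f, fun γ' A => ?_⟩
  obtain ⟨γ, rfl⟩ := hf γ'
  change m.m (f ⁻¹' ((f γ * ·) '' A)) = m.m (f ⁻¹' A)
  have hpre : f ⁻¹' ((f γ * ·) '' A) = (γ * ·) '' (f ⁻¹' A) := by
    ext x
    simp [Set.image_mul_left]
  rw [hpre, hm]

lemma MulEquiv.amenableGroup_iff (e : Γ ≃* Γ') : AmenableGroup Γ ↔ AmenableGroup Γ' :=
  ⟨fun h => h.of_surjective e.toMonoidHom e.surjective,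
    fun h => h.of_surjective e.symm.toMonoidHom e.symm.surjective⟩

lemma AmenableGroup.amenableAction {K : Subgroup Γ} (hK : AmenableGroup K) :
    AmenableAction K Γ := by
  obtain ⟨ν, hν⟩ := hK
  refine ⟨ν.map Subtype.val, fun k A => ?_⟩
  change ν.m (Subtype.val ⁻¹' ((k • ·) '' A)) = ν.m (Subtype.val ⁻¹' A)
  have hpre : Subtype.val ⁻¹' ((k • ·) '' A) = (k * ·) '' (Subtype.val ⁻¹' A) := by
    ext x
    simp [Set.image_mul_left, Subgroup.smul_def]
  rw [hpre, hν]

variable [MulAction Γ X]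

variable (Γ X) in
def amenableStabilizers : SubMulAction Γ X where
  carrier := {x | AmenableGroup (stabilizer Γ x)}
  smul_mem' γ x hx := by
    change AmenableGroup (stabilizer Γ (γ • x))
    rw [stabilizer_smul_eq_stabilizer_map_conj]
    exact (MulEquiv.subgroupMap (MulAut.conj γ) _).amenableGroup_iff.1 hx

theorem AmenableAction.amenableGroup (hX : AmenableAction Γ X)
    (hstab : ∀ x : X, AmenableGroup (stabilizer Γ x)) : AmenableGroup Γ := by
  obtain ⟨m, hm⟩ := hX
  choose ν hν using fun x => (hstab x).amenableAction
  set r : X → X := fun y => (Quotient.mk (orbitRel Γ X) y).out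
  have hr : ∀ (γ : Γ) y, r (γ • y) = r y := fun γ y =>
    congrArg Quotient.out (Quotient.sound (orbitRel_apply.2 (mem_orbit y γ)))
  have hT : ∀ y, ∃ γ : Γ, γ • r y = y := fun y =>
    mem_orbit_symm.1 (orbitRel_apply.1 (Quotient.mk_out (s := orbitRel Γ X) y))
  choose T hT using hT
  -- Writing `y = T y • r y`, the mean at `y` is the `T y`-translate of a
  -- `stabilizer (r y)`-invariant mean; this family is equivariant.
  refine ⟨m.bind fun y => (ν (r y)).map (T y • ·), hm.bind fun γ y A => ?_⟩
  set s := (T (γ • y))⁻¹ * γ * T y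
  have hs : s ∈ stabilizer Γ (r y) := by
    rw [mem_stabilizer_iff, mul_smul, mul_smul, hT, inv_smul_eq_iff, ← hr γ y, hT]
  change (ν (r (γ • y))).m ((T (γ • y) • ·) ⁻¹' (γ • A)) = (ν (r y)).m ((T y • ·) ⁻¹' A)
  have hset : (T (γ • y))⁻¹ • γ • A =
      (fun g => (⟨s, hs⟩ : stabilizer Γ (r y)) • g) '' ((T y)⁻¹ • A) := by
    change _ = (s • ·) '' _
    rw [Set.image_smul, smul_smul, smul_smul]
    simp only [s, mul_inv_cancel_right]
  rw [hr, Set.preimage_smul, Set.preimage_smul, hset, hν]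

lemma MeanInvariant.m_amenableStabilizers_eq_zero {m : Mean X} (hm : MeanInvariant Γ m)
    (hΓ : ¬ AmenableGroup Γ) : m.m (amenableStabilizers Γ X) = 0 := by
  by_contra h
  refine hΓ ((hm.amenableAction_subMulAction _ (lt_of_le_of_ne (m.nonneg _) (Ne.symm h))
    ).amenableGroup fun x => ?_)
  rw [SubMulAction.stabilizer_of_subMul]
  exact x.2

end Amenable

section Conjugation

variable {G : Type*} [Group G]

open MulAction ConjAct Subgroup

/-- `L`, viewed inside `ConjAct G` so that it acts on `G` by conjugation. -/
abbrev conjActSubgroup (L : Subgroup G) : Subgroup (ConjAct G) :=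
  L.comap ofConjAct.toMonoidHom

def conjActSubgroupEquiv (L : Subgroup G) : conjActSubgroup L ≃* L where
  toFun γ := ⟨ofConjAct γ, γ.2⟩
  invFun l := ⟨toConjAct l, by simp⟩
  left_inv _ := rfl
  right_inv _ := rfl
  map_mul' _ _ := rfl

lemma toConjAct_smul_eq_iff_mem_centralizer {a g : G} :
    toConjAct a • g = g ↔ a ∈ centralizer {g} := by
  rw [ConjAct.smul_def, ofConjAct_toConjAct, mul_inv_eq_iff_eq_mul,
    mem_centralizer_singleton_iff, eq_comm]

def stabilizerConjActSubgroupEquiv (L : Subgroup G) (g : G) :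
    stabilizer (conjActSubgroup L) g ≃* ↥(L ⊓ centralizer {g}) where
  toFun s := ⟨ofConjAct s.1, s.1.2, toConjAct_smul_eq_iff_mem_centralizer.1 s.2⟩
  invFun l :=
    ⟨⟨toConjAct l, by simpa using l.2.1⟩, toConjAct_smul_eq_iff_mem_centralizer.2 l.2.2⟩
  left_inv _ := rfl
  right_inv _ := rfl
  map_mul' _ _ := rfl

lemma m_setOf_amenableGroup_inf_centralizer_eq_zero {m : Mean G} {L : Subgroup G}
    (hm : ∀ l ∈ L, ∀ A : Set G, m.m ((fun x => l * x * l⁻¹) '' A) = m.m A)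
    (hL : ¬ AmenableGroup L) :
    m.m {g | AmenableGroup ↥(L ⊓ centralizer {g})} = 0 := by
  have hinv : MeanInvariant (conjActSubgroup L) m := fun γ A => hm _ γ.2 A
  convert hinv.m_amenableStabilizers_eq_zero
    ((conjActSubgroupEquiv L).amenableGroup_iff.not.2 hL) using 2
  ext g
  exact (stabilizerConjActSubgroupEquiv L g).amenableGroup_iff.symm

end Conjugation

section Trichotomy

variable {G : Type*} [Group G]

open Subgroup Filter

def InfCentralizerNonamenable (F : Finset (Subgroup G)) (S : Set G) : Prop :=
  ∀ L ∈ F, ¬ AmenableGroup ↥(L ⊓ centralizer S)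

lemma infCentralizerNonamenable_bot {F : Finset (Subgroup G)} (hF : ∀ L ∈ F, ¬ AmenableGroup L) :
    InfCentralizerNonamenable F ((⊥ : Subgroup G) : Set G) := fun L hL => by
  rw [coe_bot, centralizer_eq_top_iff_subset.2 (Set.singleton_subset_iff.2 (one_mem _)),
    inf_top_eq]
  exact hF L hL

lemma PairInnerAmenable.exists_notMem_infCentralizerNonamenable {H : Subgroup G}
    (hpair : PairInnerAmenable H) {F : Finset (Subgroup G)}
    (hF : ∀ L ∈ F, L ≤ H ∧ ¬ AmenableGroup L) {S : Set G} (hS : S.Finite) :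
    ∃ g ∉ S, InfCentralizerNonamenable F {g} := by
  obtain ⟨m, hatom, hm⟩ := hpair
  have hnull : m.m (S ∪ ⋃ L ∈ F, {g | AmenableGroup ↥(L ⊓ centralizer {g})}) = 0 :=
    m.m_union_eq_zero (m.m_eq_zero_of_finite hatom hS) <| m.m_biUnion_eq_zero F fun L hL =>
      m_setOf_amenableGroup_inf_centralizer_eq_zero (fun l hl => hm l ((hF L hL).1 hl))
        (hF L hL).2
  obtain ⟨g, hg⟩ := m.exists_notMem_of_m_eq_zero hnull
  simp only [Set.mem_union, Set.mem_iUnion, not_or, not_exists] at hg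
  exact ⟨g, hg.1, hg.2⟩

lemma Subgroup.centralizer_insert (g : G) (S : Set G) :
    centralizer (insert g S) = centralizer {g} ⊓ centralizer S := by
  ext x
  simp [mem_centralizer_iff]

lemma PairInnerAmenable.exists_gt_infCentralizerNonamenable {H : Subgroup G}
    (hpair : PairInnerAmenable H) {F : Finset (Subgroup G)}
    (hF : ∀ L ∈ F, L ≤ H ∧ ¬ AmenableGroup L) {M : Subgroup G} (hM : (M : Set G).Finite)
    (hMF : InfCentralizerNonamenable F M) :
    ∃ M' : Subgroup G, M < M' ∧ InfCentralizerNonamenable F M' := by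
  classical
  obtain ⟨g, hgM, hg⟩ := hpair.exists_notMem_infCentralizerNonamenable
    (F := F.image (· ⊓ centralizer (M : Set G)))
    (by simpa using fun L hL => ⟨inf_le_left.trans (hF L hL).1, hMF L hL⟩) hM
  refine ⟨closure (insert g M), SetLike.lt_iff_le_and_exists.2
    ⟨fun x hx => subset_closure (Set.mem_insert_of_mem g hx), g,
      subset_closure (Set.mem_insert g _), hgM⟩, fun L hL => ?_⟩
  rw [centralizer_closure, centralizer_insert, inf_comm (centralizer {g}), ← inf_assoc]
  exact hg _ (Finset.mem_image_of_mem _ hL)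

lemma exists_infinite_or_exists_strictMono_finite {P : Subgroup G → Prop} (hbot : P ⊥)
    (hstep : ∀ M : Subgroup G, (M : Set G).Finite → P M → ∃ M', M < M' ∧ P M') :
    (∃ K, P K ∧ (K : Set G).Infinite) ∨
      ∃ M : ℕ → Subgroup G, StrictMono M ∧ ∀ n, P (M n) ∧ (M n : Set G).Finite := by
  refine or_iff_not_imp_left.2 fun hfin => ?_
  push Not at hfin
  have : Nonempty {M // P M} := ⟨⟨⊥, hbot⟩⟩
  have : NoMaxOrder {M // P M} := ⟨fun M => by
    obtain ⟨M', hlt, hM'⟩ := hstep M (hfin M M.2) M.2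
    exact ⟨⟨M', hM'⟩, hlt⟩⟩
  obtain ⟨f, hf⟩ := Nat.exists_strictMono {M // P M}
  exact ⟨fun n => f n, (Subtype.strictMono_coe _).comp hf, fun n => ⟨(f n).2, hfin _ (f n).2⟩⟩

lemma tendsto_ncard_of_strictMono {α : Type*} {s : ℕ → Set α} (hs : StrictMono s)
    (hfin : ∀ n, (s n).Finite) : Tendsto (fun n => (s n).ncard) atTop atTop :=
  StrictMono.tendsto_atTop fun _ b hab => Set.ncard_lt_ncard (hs hab) (hfin b)

end Trichotomy

theorem pair_subgroup_trichotomy_general {G : Type*} [Group G] (H : Subgroup G)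
    (hpair : PairInnerAmenable H) :
    (∀ F : Finset (Subgroup G), (∀ L ∈ F, L ≤ H ∧ ¬ AmenableGroup ↥L) →
      ∃ K : Subgroup G, ((K : Set G)).Infinite ∧ AmenableGroup ↥K ∧
        ∀ L ∈ F, ¬ AmenableGroup ↥(L ⊓ Subgroup.centralizer (K : Set G))) ∨
    (∀ F : Finset (Subgroup G), (∀ L ∈ F, L ≤ H ∧ ¬ AmenableGroup ↥L) →
      ∃ M : ℕ → Subgroup G, Monotone M ∧ (∀ n, ((M n : Subgroup G) : Set G).Finite) ∧
        Filter.Tendsto (fun n => ((M n : Subgroup G) : Set G).ncard) Filter.atTop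
          Filter.atTop ∧
        ∀ L ∈ F, ∀ n : ℕ,
          ¬ AmenableGroup ↥(L ⊓ Subgroup.centralizer ((M n : Subgroup G) : Set G))) ∨
    (∀ F : Finset (Subgroup G), (∀ L ∈ F, L ≤ H ∧ ¬ AmenableGroup ↥L) →
      ∃ K : Subgroup G, ¬ AmenableGroup ↥K ∧
        ∀ L ∈ F, ¬ AmenableGroup ↥(L ⊓ Subgroup.centralizer (K : Set G))) := by
  classical
  refine or_iff_not_imp_left.2 fun h₁ => or_iff_not_imp_left.2 fun h₂ F hF => ?_
  push Not at h₁ h₂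
  obtain ⟨F₁, hF₁, h₁⟩ := h₁
  obtain ⟨F₂, hF₂, h₂⟩ := h₂
  -- one chain of subgroups serves `F` and the witnesses `F₁`, `F₂` against (1) and (2) at once
  set F' := F ∪ F₁ ∪ F₂
  have hF' : ∀ L ∈ F', L ≤ H ∧ ¬ AmenableGroup L := by
    simp only [F', Finset.mem_union]
    rintro L ((hL | hL) | hL)
    exacts [hF L hL, hF₁ L hL, hF₂ L hL]
  rcases exists_infinite_or_exists_strictMono_finite
      (P := fun K => InfCentralizerNonamenable F' K)
      (infCentralizerNonamenable_bot fun L hL => (hF' L hL).2)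
      (fun M hM hMF => hpair.exists_gt_infCentralizerNonamenable hF' hM hMF) with
    ⟨K, hK, hKinf⟩ | ⟨M, hM, hMF⟩
  · by_cases hKam : AmenableGroup K
    · obtain ⟨L, hL, hLK⟩ := h₁ K hKinf hKam
      exact absurd hLK (hK L (by simp [F', hL]))
    · exact ⟨K, hKam, fun L hL => hK L (by simp [F', hL])⟩
  · obtain ⟨L, hL, n, hn⟩ := h₂ M hM.monotone (fun n => (hMF n).2)
      (tendsto_ncard_of_strictMono (SetLike.coe_strictMono.comp hM) fun n => (hMF n).2)
    exact absurd hn ((hMF n).1 L (by simp [F', hL]))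

/-- Theorem (trichotomy for inner amenable pairs). -/
theorem pair_subgroup_trichotomy {G : Type*} [Group G] [Countable G] (H : Subgroup G)
    (hpair : PairInnerAmenable H) (hH : ¬ AmenableGroup ↥H) :
    (∀ F : Finset (Subgroup G), (∀ L ∈ F, L ≤ H ∧ ¬ AmenableGroup ↥L) →
      ∃ K : Subgroup G, ((K : Set G)).Infinite ∧ AmenableGroup ↥K ∧
        ∀ L ∈ F, ¬ AmenableGroup ↥(L ⊓ Subgroup.centralizer (K : Set G))) ∨
    (∀ F : Finset (Subgroup G), (∀ L ∈ F, L ≤ H ∧ ¬ AmenableGroup ↥L) →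
      ∃ M : ℕ → Subgroup G, Monotone M ∧ (∀ n, ((M n : Subgroup G) : Set G).Finite) ∧
        Filter.Tendsto (fun n => ((M n : Subgroup G) : Set G).ncard) Filter.atTop
          Filter.atTop ∧
        ∀ L ∈ F, ∀ n : ℕ,
          ¬ AmenableGroup ↥(L ⊓ Subgroup.centralizer ((M n : Subgroup G) : Set G))) ∨
    (∀ F : Finset (Subgroup G), (∀ L ∈ F, L ≤ H ∧ ¬ AmenableGroup ↥L) →
      ∃ K : Subgroup G, ¬ AmenableGroup ↥K ∧
        ∀ L ∈ F, ¬ AmenableGroup ↥(L ⊓ Subgroup.centralizer (K : Set G))) :=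
  pair_subgroup_trichotomy_general H hpair
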